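/- arXiv:1904.11632 — 7 statements merged into one kernel-verified Lean document; each statement's English description precedes it below -/
import Mathlib

section
/- If uncertain variables X and Y are associated at levels (δ, δ₂), then the family of conditional ranges ⟦X|Y⟧ = {⟦X|y⟧ : y ∈ ⟦Y⟧} is a δ-overlap family of ⟦X⟧: it covers ⟦X⟧, each member is δ-connected and contains a singly δ-connected set of the form ⟦X|y⟧, the uncertainty of the intersection of any two distinct members is at most δ·m_𝒳(⟦X⟧), and every singly δ-connected set ⟦X|y⟧ is contained in some member of the family. -/
open Set Real

namespace NSIT

variable {Ω 𝒳 𝒴 : Type*}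

/-- The conditional range `⟦X|y⟧` of an uncertain variable `X` given that the
uncertain variable `Y` takes the value `y`. -/
def condRange (X : Ω → 𝒳) (Y : Ω → 𝒴) (y : 𝒴) : Set 𝒳 :=
  X '' {ω | Y ω = y}

/-- `m` is an uncertainty function: it vanishes on the empty set, is positive (and
finite, being real-valued) on nonempty sets, and is strongly transitive. -/
def IsUncertaintyFn (m : Set 𝒳 → ℝ) : Prop :=
  m ∅ = 0 ∧ (∀ S : Set 𝒳, S.Nonempty → 0 < m S) ∧
    ∀ S₁ S₂ : Set 𝒳, max (m S₁) (m S₂) ≤ m (S₁ ∪ S₂)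

/-- The set of association `𝒜(X;Y)`: all nonzero relative uncertainties of
intersections of two distinct conditional ranges of `X` given values of `Y`. -/
def assocSet (mX : Set 𝒳 → ℝ) (X : Ω → 𝒳) (Y : Ω → 𝒴) : Set ℝ :=
  {r | r ≠ 0 ∧ ∃ y₁ ∈ Set.range Y, ∃ y₂ ∈ Set.range Y, y₁ ≠ y₂ ∧
    r = mX (condRange X Y y₁ ∩ condRange X Y y₂) / mX (Set.range X)}

/-- `X` and `Y` are associated at levels `(δ₁, δ₂)`:
`𝒜(X;Y) ⪯ δ₁` and `𝒜(Y;X) ⪯ δ₂` (vacuously true for empty association sets). -/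
def Associated (mX : Set 𝒳 → ℝ) (mY : Set 𝒴 → ℝ) (X : Ω → 𝒳) (Y : Ω → 𝒴)
    (δ₁ δ₂ : ℝ) : Prop :=
  (∀ r ∈ assocSet mX X Y, r ≤ δ₁) ∧ ∀ r ∈ assocSet mY Y X, r ≤ δ₂

/-- `X` and `Y` are disassociated at levels `(δ₁, δ₂)`:
`𝒜(X;Y) ≻ δ₁` and `𝒜(Y;X) ≻ δ₂` (which in particular requires the association
sets to be nonempty). -/
def Disassociated (mX : Set 𝒳 → ℝ) (mY : Set 𝒴 → ℝ) (X : Ω → 𝒳) (Y : Ω → 𝒴)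
    (δ₁ δ₂ : ℝ) : Prop :=
  (assocSet mX X Y).Nonempty ∧ (∀ r ∈ assocSet mX X Y, δ₁ < r) ∧
    (assocSet mY Y X).Nonempty ∧ ∀ r ∈ assocSet mY Y X, δ₂ < r

/-- `x₁` and `x₂` are `δ`-connected via `⟦X|Y⟧`: there is a finite chain of
conditional ranges joining them whose consecutive intersections have relative
uncertainty greater than `δ`. -/
def Conn (mX : Set 𝒳 → ℝ) (X : Ω → 𝒳) (Y : Ω → 𝒴) (δ : ℝ) (x₁ x₂ : 𝒳) : Prop :=
  ∃ (N : ℕ) (ys : Fin (N + 1) → 𝒴),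
    x₁ ∈ condRange X Y (ys 0) ∧ x₂ ∈ condRange X Y (ys (Fin.last N)) ∧
    ∀ i : Fin N,
      δ < mX (condRange X Y (ys i.succ) ∩ condRange X Y (ys i.castSucc)) /
        mX (Set.range X)

/-- `F` is a `δ`-overlap family (for `X` given `Y`): it covers `⟦X⟧`, each member
is `δ`-connected and contains a singly `δ`-connected set of the form `⟦X|y⟧`,
any two distinct members overlap with uncertainty at most `δ · m(⟦X⟧)`, and every
conditional range `⟦X|y⟧` is contained in some member. -/
def IsOverlapFamily (mX : Set 𝒳 → ℝ) (X : Ω → 𝒳) (Y : Ω → 𝒴) (δ : ℝ)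
    (F : Set (Set 𝒳)) : Prop :=
  ⋃₀ F = Set.range X ∧
  (∀ S ∈ F, (∀ x₁ ∈ S, ∀ x₂ ∈ S, Conn mX X Y δ x₁ x₂) ∧
    ∃ y ∈ Set.range Y, condRange X Y y ⊆ S) ∧
  (∀ S₁ ∈ F, ∀ S₂ ∈ F, S₁ ≠ S₂ → mX (S₁ ∩ S₂) ≤ δ * mX (Set.range X)) ∧
  ∀ y ∈ Set.range Y, ∃ S ∈ F, condRange X Y y ⊆ S

/-- Theorem 1: if `X` and `Y` are associated at levels `(δ, δ₂)`,
then the family of conditional ranges `⟦X|Y⟧` is a `δ`-overlap family of `⟦X⟧`. -/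
theorem associated_condRange_isOverlapFamily
    {Ω 𝒳 𝒴 : Type*} (mX : Set 𝒳 → ℝ) (mY : Set 𝒴 → ℝ)
    (hmX : IsUncertaintyFn mX) (hmY : IsUncertaintyFn mY)
    (X : Ω → 𝒳) (Y : Ω → 𝒴) (δ δ₂ : ℝ)
    (hδ : 0 ≤ δ) (hδ' : δ ≤ 1) (hδ₂ : 0 ≤ δ₂) (hδ₂' : δ₂ ≤ 1)
    (h : Associated mX mY X Y δ δ₂) :
    IsOverlapFamily mX X Y δ {S | ∃ y ∈ Set.range Y, S = condRange X Y y} := by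
  refine ⟨?_, ?_, ?_, ?_⟩
  · apply subset_antisymm
    · rintro x ⟨S, ⟨y, -, rfl⟩, hx⟩
      rcases hx with ⟨ω, -, rfl⟩
      exact ⟨ω, rfl⟩
    · rintro x ⟨ω, rfl⟩
      exact ⟨condRange X Y (Y ω), ⟨Y ω, ⟨ω, rfl⟩, rfl⟩, ⟨ω, rfl, rfl⟩⟩
  · rintro S ⟨y, hy, rfl⟩
    refine ⟨fun x₁ h₁ x₂ h₂ => ⟨0, fun _ => y, h₁, h₂, fun i => i.elim0⟩,
      y, hy, subset_rfl⟩
  · rintro S₁ ⟨y₁, hy₁, rfl⟩ S₂ ⟨y₂, hy₂, rfl⟩ hne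
    by_cases hemp : (condRange X Y y₁ ∩ condRange X Y y₂).Nonempty
    · have hy : y₁ ≠ y₂ := fun h => hne (by rw [h])
      have hpos := hmX.2.1 _ hemp
      have hRX : (Set.range X).Nonempty := by
        rcases hemp with ⟨x, hx, -⟩
        rcases hx with ⟨ω, -, rfl⟩
        exact ⟨X ω, ω, rfl⟩
      have hRpos := hmX.2.1 _ hRX
      have hr : mX (condRange X Y y₁ ∩ condRange X Y y₂) / mX (Set.range X)
          ∈ assocSet mX X Y := by
        exact ⟨ne_of_gt (div_pos hpos hRpos), y₁, hy₁, y₂, hy₂, hy, rfl⟩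
      have := h.1 _ hr
      calc mX (condRange X Y y₁ ∩ condRange X Y y₂)
          = mX (condRange X Y y₁ ∩ condRange X Y y₂) / mX (Set.range X)
            * mX (Set.range X) := by field_simp
        _ ≤ δ * mX (Set.range X) := by
            exact mul_le_mul_of_nonneg_right this hRpos.le
    · rw [Set.not_nonempty_iff_eq_empty] at hemp
      rw [hemp, hmX.1]
      have hRnn : 0 ≤ mX (Set.range X) := by
        rcases Set.eq_empty_or_nonempty (Set.range X) with h0 | h0
        · rw [h0, hmX.1]
        · exact (hmX.2.1 _ h0).le
      positivity
  · rintro y hy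
    exact ⟨condRange X Y y, ⟨y, hy, rfl⟩, subset_rfl⟩

end NSIT
end

section
/- If uncertain variables X and Y are disassociated at levels (δ, δ₂), then the family 𝒞 = {𝒞(x) : x ∈ ⟦X⟧}, where 𝒞(x) is the set of all points δ-connected to x via ⟦X|Y⟧, is a δ-overlap family of ⟦X⟧; moreover any two distinct sets 𝒞(x₁) ≠ 𝒞(x₂) in this family satisfy m_𝒳(𝒞(x₁) ∩ 𝒞(x₂)) = 0. -/
open Set Real

namespace NSIT

variable {Ω 𝒳 𝒴 : Type*}

/-- The `δ`-connected component `𝒞(x)`: all points of `⟦X⟧` that are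
`δ`-connected to `x` via `⟦X|Y⟧`. -/
def connComp (mX : Set 𝒳 → ℝ) (X : Ω → 𝒳) (Y : Ω → 𝒴) (δ : ℝ) (x : 𝒳) :
    Set 𝒳 :=
  {x₁ ∈ Set.range X | Conn mX X Y δ x x₁}

/-!
Under disassociation, two distinct conditional ranges sharing a point have an intersection of
positive relative uncertainty, which therefore lies in `𝒜(X;Y)` and exceeds `δ`. Hence two chains
through a common point can be joined, `δ`-connectedness is an equivalence relation on `⟦X⟧`, and the
sets `𝒞(x)` are its classes: they cover `⟦X⟧`, each contains the conditional ranges through its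
points, and distinct ones are disjoint, so their overlap has uncertainty `m(∅) = 0 ≤ δ · m(⟦X⟧)`.
-/

lemma IsUncertaintyFn.nonneg {m : Set 𝒳 → ℝ} (hm : IsUncertaintyFn m) (S : Set 𝒳) :
    0 ≤ m S := by
  rcases S.eq_empty_or_nonempty with rfl | hS
  · exact hm.1.ge
  · exact (hm.2.1 S hS).le

lemma mem_condRange_self (X : Ω → 𝒳) (Y : Ω → 𝒴) (ω : Ω) : X ω ∈ condRange X Y (Y ω) :=
  ⟨ω, rfl, rfl⟩

lemma condRange_subset_range (X : Ω → 𝒳) (Y : Ω → 𝒴) (y : 𝒴) :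
    condRange X Y y ⊆ range X :=
  image_subset_range _ _

/-- The intersection is written in the order used by `Conn`, so that its chains are literally the
`RelSeries` of this relation. -/
def overlapRel (mX : Set 𝒳 → ℝ) (X : Ω → 𝒳) (Y : Ω → 𝒴) (δ : ℝ) : SetRel 𝒴 𝒴 :=
  {p | δ < mX (condRange X Y p.2 ∩ condRange X Y p.1) / mX (range X)}

section Chains

variable {mX : Set 𝒳 → ℝ} {X : Ω → 𝒳} {Y : Ω → 𝒴} {δ : ℝ}

lemma mem_range_of_mem_condRange {x : 𝒳} {y : 𝒴} (hx : x ∈ condRange X Y y) :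
    y ∈ range Y := by
  obtain ⟨ω, hω, -⟩ := hx
  exact ⟨ω, hω⟩

instance : (overlapRel mX X Y δ).IsSymm :=
  ⟨fun _ _ h => by change δ < _ / _ at h ⊢; rwa [inter_comm]⟩

lemma conn_iff_exists_relSeries {x₁ x₂ : 𝒳} :
    Conn mX X Y δ x₁ x₂ ↔ ∃ p : RelSeries (overlapRel mX X Y δ),
      x₁ ∈ condRange X Y p.head ∧ x₂ ∈ condRange X Y p.last :=
  ⟨fun ⟨N, ys, h₁, h₂, hys⟩ => ⟨⟨N, ys, hys⟩, h₁, h₂⟩,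
    fun ⟨p, h₁, h₂⟩ => ⟨p.length, p.toFun, h₁, h₂, p.step⟩⟩

lemma conn_of_mem_condRange {x₁ x₂ : 𝒳} {y : 𝒴} (h₁ : x₁ ∈ condRange X Y y)
    (h₂ : x₂ ∈ condRange X Y y) : Conn mX X Y δ x₁ x₂ :=
  conn_iff_exists_relSeries.2 ⟨RelSeries.singleton _ y, h₁, h₂⟩

lemma conn_refl {x : 𝒳} (hx : x ∈ range X) : Conn mX X Y δ x x := by
  obtain ⟨ω, rfl⟩ := hx
  exact conn_of_mem_condRange (mem_condRange_self X Y ω) (mem_condRange_self X Y ω)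

lemma Conn.symm {x₁ x₂ : 𝒳} (h : Conn mX X Y δ x₁ x₂) : Conn mX X Y δ x₂ x₁ := by
  obtain ⟨p, h₁, h₂⟩ := conn_iff_exists_relSeries.1 h
  refine conn_iff_exists_relSeries.2 ⟨p.reverse.ofLE (SetRel.inv_eq_self _).le, ?_, ?_⟩
  · change x₂ ∈ condRange X Y p.reverse.head
    rwa [RelSeries.head_reverse]
  · change x₁ ∈ condRange X Y p.reverse.last
    rwa [RelSeries.last_reverse]

lemma overlapRel_of_mem_condRange (hm : IsUncertaintyFn mX)
    (hd : ∀ r ∈ assocSet mX X Y, δ < r) {x : 𝒳} {y₁ y₂ : 𝒴}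
    (h₁ : x ∈ condRange X Y y₁) (h₂ : x ∈ condRange X Y y₂) (hne : y₁ ≠ y₂) :
    (y₁, y₂) ∈ overlapRel mX X Y δ := by
  have hpos : 0 < mX (condRange X Y y₂ ∩ condRange X Y y₁) / mX (range X) :=
    div_pos (hm.2.1 _ ⟨x, h₂, h₁⟩) (hm.2.1 _ ⟨x, condRange_subset_range X Y y₁ h₁⟩)
  exact hd _ ⟨hpos.ne', y₂, mem_range_of_mem_condRange h₂, y₁,
    mem_range_of_mem_condRange h₁, hne.symm, rfl⟩

lemma Conn.trans (hm : IsUncertaintyFn mX) (hd : ∀ r ∈ assocSet mX X Y, δ < r)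
    {x₁ x₂ x₃ : 𝒳} (h₁₂ : Conn mX X Y δ x₁ x₂) (h₂₃ : Conn mX X Y δ x₂ x₃) :
    Conn mX X Y δ x₁ x₃ := by
  obtain ⟨p, hp₁, hp₂⟩ := conn_iff_exists_relSeries.1 h₁₂
  obtain ⟨q, hq₂, hq₃⟩ := conn_iff_exists_relSeries.1 h₂₃
  by_cases hpq : p.last = q.head
  · exact conn_iff_exists_relSeries.2 ⟨p.smash q hpq, by simpa using hp₁, by simpa using hq₃⟩
  · have hlink := overlapRel_of_mem_condRange hm hd hp₂ hq₂ hpq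
    exact conn_iff_exists_relSeries.2 ⟨p.append q hlink, by simpa using hp₁, by simpa using hq₃⟩

end Chains

section Components

variable {mX : Set 𝒳 → ℝ} {X : Ω → 𝒳} {Y : Ω → 𝒴} {δ : ℝ}

lemma condRange_subset_connComp {x : 𝒳} {y : 𝒴} (hx : x ∈ condRange X Y y) :
    condRange X Y y ⊆ connComp mX X Y δ x :=
  fun _ hx' => ⟨condRange_subset_range X Y y hx', conn_of_mem_condRange hx hx'⟩

lemma sUnion_connComp :
    ⋃₀ {S | ∃ x ∈ range X, S = connComp mX X Y δ x} = range X := by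
  refine subset_antisymm ?_ fun x hx => ⟨_, ⟨x, hx, rfl⟩, hx, conn_refl hx⟩
  rintro x ⟨_, ⟨x', -, rfl⟩, hx⟩
  exact hx.1

variable (hm : IsUncertaintyFn mX) (hd : ∀ r ∈ assocSet mX X Y, δ < r)
include hm hd

lemma conn_of_mem_connComp {x x₁ x₂ : 𝒳} (h₁ : x₁ ∈ connComp mX X Y δ x)
    (h₂ : x₂ ∈ connComp mX X Y δ x) : Conn mX X Y δ x₁ x₂ :=
  h₁.2.symm.trans hm hd h₂.2

lemma connComp_eq_of_conn {x₁ x₂ : 𝒳} (h : Conn mX X Y δ x₁ x₂) :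
    connComp mX X Y δ x₁ = connComp mX X Y δ x₂ :=
  ext fun _ => and_congr_right fun _ => ⟨h.symm.trans hm hd, h.trans hm hd⟩

lemma connComp_inter_eq_empty {x₁ x₂ : 𝒳}
    (hne : connComp mX X Y δ x₁ ≠ connComp mX X Y δ x₂) :
    connComp mX X Y δ x₁ ∩ connComp mX X Y δ x₂ = ∅ := by
  by_contra h
  obtain ⟨x, ⟨-, h₁⟩, ⟨-, h₂⟩⟩ := nonempty_iff_ne_empty.2 h
  exact hne (connComp_eq_of_conn hm hd (h₁.trans hm hd h₂.symm))

end Components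

theorem disassociated_connComp_isOverlapFamily_general
    {Ω 𝒳 𝒴 : Type*} (mX : Set 𝒳 → ℝ) (mY : Set 𝒴 → ℝ)
    (hmX : IsUncertaintyFn mX)
    (X : Ω → 𝒳) (Y : Ω → 𝒴) (δ δ₂ : ℝ)
    (hδ : 0 ≤ δ)
    (hd : Disassociated mX mY X Y δ δ₂) :
    IsOverlapFamily mX X Y δ
      {S | ∃ x ∈ Set.range X, S = connComp mX X Y δ x} ∧
    ∀ x₁ ∈ Set.range X, ∀ x₂ ∈ Set.range X,
      connComp mX X Y δ x₁ ≠ connComp mX X Y δ x₂ →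
        mX (connComp mX X Y δ x₁ ∩ connComp mX X Y δ x₂) = 0 := by
  obtain ⟨-, hdX, -, -⟩ := hd
  have hdisj {x₁ x₂ : 𝒳} (hne : connComp mX X Y δ x₁ ≠ connComp mX X Y δ x₂) :
      mX (connComp mX X Y δ x₁ ∩ connComp mX X Y δ x₂) = 0 := by
    rw [connComp_inter_eq_empty hmX hdX hne, hmX.1]
  refine ⟨⟨sUnion_connComp, ?_, ?_, ?_⟩, fun _ _ _ _ hne => hdisj hne⟩
  · rintro _ ⟨_, ⟨ω, rfl⟩, rfl⟩
    exact ⟨fun _ h₁ _ h₂ => conn_of_mem_connComp hmX hdX h₁ h₂,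
      Y ω, mem_range_self ω, condRange_subset_connComp (mem_condRange_self X Y ω)⟩
  · rintro _ ⟨x₁, -, rfl⟩ _ ⟨x₂, -, rfl⟩ hne
    rw [hdisj hne]
    exact mul_nonneg hδ (hmX.nonneg _)
  · rintro _ ⟨ω, rfl⟩
    exact ⟨_, ⟨X ω, mem_range_self ω, rfl⟩, condRange_subset_connComp (mem_condRange_self X Y ω)⟩

/-- Theorem 2, part: if `X` and `Y` are disassociated at levels
`(δ, δ₂)`, then the family `𝒞 = {𝒞(x) : x ∈ ⟦X⟧}` of `δ`-connected components is
a `δ`-overlap family of `⟦X⟧`, and any two distinct members of it have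
intersection of uncertainty zero. -/
theorem disassociated_connComp_isOverlapFamily
    {Ω 𝒳 𝒴 : Type*} (mX : Set 𝒳 → ℝ) (mY : Set 𝒴 → ℝ)
    (hmX : IsUncertaintyFn mX) (hmY : IsUncertaintyFn mY)
    (X : Ω → 𝒳) (Y : Ω → 𝒴) (δ δ₂ : ℝ)
    (hδ : 0 ≤ δ) (hδ' : δ < 1) (hδ₂ : 0 ≤ δ₂) (hδ₂' : δ₂ < 1)
    (hd : Disassociated mX mY X Y δ δ₂) :
    IsOverlapFamily mX X Y δ
      {S | ∃ x ∈ Set.range X, S = connComp mX X Y δ x} ∧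
    ∀ x₁ ∈ Set.range X, ∀ x₂ ∈ Set.range X,
      connComp mX X Y δ x₁ ≠ connComp mX X Y δ x₂ →
        mX (connComp mX X Y δ x₁ ∩ connComp mX X Y δ x₂) = 0 :=
  disassociated_connComp_isOverlapFamily_general mX mY hmX X Y δ δ₂ hδ hd

end NSIT
end

section
/- If uncertain variables X and Y are disassociated at levels (δ, δ₂), then the δ-overlap family of ⟦X⟧ is unique, and it is a δ-isolated partition of ⟦X⟧ of largest cardinality: for any δ-isolated partition P of ⟦X⟧ (a partition whose distinct blocks are pairwise δ-isolated via ⟦X|Y⟧), |P| ≤ |⟦X|Y⟧*_δ|, with equality if and only if P equals the δ-overlap family. -/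
open Set Real

namespace NSIT

variable {Ω 𝒳 𝒴 : Type*}

/-- Two sets are `δ`-isolated via `⟦X|Y⟧` if no point of one is `δ`-connected to
any point of the other. -/
def Isolated (mX : Set 𝒳 → ℝ) (X : Ω → 𝒳) (Y : Ω → 𝒴) (δ : ℝ)
    (S₁ S₂ : Set 𝒳) : Prop :=
  ∀ x₁ ∈ S₁, ∀ x₂ ∈ S₂, ¬ Conn mX X Y δ x₁ x₂

/-- `P` is a `δ`-isolated partition of `⟦X⟧`: a partition of `⟦X⟧` into nonempty
pairwise disjoint blocks that are pairwise `δ`-isolated via `⟦X|Y⟧`. -/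
def IsIsolatedPartition (mX : Set 𝒳 → ℝ) (X : Ω → 𝒳) (Y : Ω → 𝒴) (δ : ℝ)
    (P : Set (Set 𝒳)) : Prop :=
  ⋃₀ P = Set.range X ∧ (∀ S ∈ P, S.Nonempty) ∧
  (∀ S₁ ∈ P, ∀ S₂ ∈ P, S₁ ≠ S₂ → Disjoint S₁ S₂) ∧
  ∀ S₁ ∈ P, ∀ S₂ ∈ P, S₁ ≠ S₂ → Isolated mX X Y δ S₁ S₂

set_option linter.unusedSectionVars false

variable {mX : Set 𝒳 → ℝ} {X : Ω → 𝒳} {Y : Ω → 𝒴} {δ : ℝ}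

lemma uMono (hm : IsUncertaintyFn mX) {A B : Set 𝒳} (h : A ⊆ B) : mX A ≤ mX B := by
  have h2 := hm.2.2 A B
  rw [Set.union_eq_self_of_subset_left h] at h2
  exact le_trans (le_max_left _ _) h2

lemma mem_rangeY_of_cr {y : 𝒴} (h : (condRange X Y y).Nonempty) : y ∈ Set.range Y := by
  obtain ⟨x, ω, hω, rfl⟩ := h
  exact ⟨ω, hω⟩

lemma cr_nonempty {y : 𝒴} (h : y ∈ Set.range Y) : (condRange X Y y).Nonempty := by
  obtain ⟨ω, rfl⟩ := h
  exact ⟨X ω, ω, rfl, rfl⟩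

lemma nonempty_of_ratio (hm : IsUncertaintyFn mX) (hδ : 0 ≤ δ) {A : Set 𝒳}
    (h : δ < mX A / mX (Set.range X)) : A.Nonempty := by
  rcases Set.eq_empty_or_nonempty A with rfl | h'
  · rw [hm.1, zero_div] at h; linarith
  · exact h'

section Family

variable (hm : IsUncertaintyFn mX) (hδ : 0 ≤ δ) (hrX : 0 < mX (Set.range X))
  (hkey : ∀ a b : 𝒴, a ∈ Set.range Y → b ∈ Set.range Y → a ≠ b →
    (condRange X Y a ∩ condRange X Y b).Nonempty →
    δ * mX (Set.range X) < mX (condRange X Y a ∩ condRange X Y b))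
  {F : Set (Set 𝒳)} (hF : IsOverlapFamily mX X Y δ F)

include hF in
lemma eq_of_big_inter {S T : Set 𝒳} (hS : S ∈ F) (hT : T ∈ F)
    (h : δ * mX (Set.range X) < mX (S ∩ T)) : S = T := by
  by_contra hne
  exact absurd (hF.2.2.1 S hS T hT hne) (not_le.mpr h)

include hm hδ hrX hkey hF in
lemma member_unique {a : 𝒴} {S T : Set 𝒳} (ha : a ∈ Set.range Y) (hS : S ∈ F)
    (hT : T ∈ F) (haS : condRange X Y a ⊆ S) (haT : condRange X Y a ⊆ T) : S = T := by
  by_cases hex : ∃ b ∈ Set.range Y, b ≠ a ∧ (condRange X Y a ∩ condRange X Y b).Nonempty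
  · obtain ⟨b, hb, hba, hne⟩ := hex
    have h1 := hkey a b ha hb (Ne.symm hba) hne
    have h2 : condRange X Y a ∩ condRange X Y b ⊆ S ∩ T :=
      fun z hz => ⟨haS hz.1, haT hz.1⟩
    exact eq_of_big_inter hF hS hT (h1.trans_le (uMono hm h2))
  · push_neg at hex
    have sub : ∀ U ∈ F, condRange X Y a ⊆ U → U ⊆ condRange X Y a := by
      intro U hU haU x'' hx''
      obtain ⟨x, hx⟩ := cr_nonempty ha
      obtain ⟨N, ys, h0, hN, hr⟩ := (hF.2.1 U hU).1 x (haU hx) x'' hx''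
      have claim : ∀ i, ys i = a := by
        intro i
        induction i using Fin.induction with
        | zero =>
          by_contra h
          exact absurd (hex (ys 0) (mem_rangeY_of_cr ⟨x, h0⟩) h)
            (Set.nonempty_iff_ne_empty.mp ⟨x, hx, h0⟩)
        | succ j ih =>
          have hne2 := nonempty_of_ratio hm hδ (hr j)
          rw [ih] at hne2
          obtain ⟨z, hz1, hz2⟩ := hne2
          by_contra h
          exact absurd (hex (ys j.succ) (mem_rangeY_of_cr ⟨z, hz1⟩) h)
            (Set.nonempty_iff_ne_empty.mp ⟨z, hz2, hz1⟩)
      rw [← claim (Fin.last N)]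
      exact hN
    rw [subset_antisymm (sub S hS haS) haS, subset_antisymm (sub T hT haT) haT]

include hm hδ hrX hkey hF in
lemma cr_subset_of_mem {S : Set 𝒳} {x : 𝒳} {a : 𝒴} (hS : S ∈ F) (hx : x ∈ S)
    (ha : a ∈ Set.range Y) (hxa : x ∈ condRange X Y a) : condRange X Y a ⊆ S := by
  obtain ⟨yS, hyS, hySsub⟩ := (hF.2.1 S hS).2
  obtain ⟨q, hq⟩ := cr_nonempty (X := X) hyS
  obtain ⟨N, ys, h0, hN, hr⟩ := (hF.2.1 S hS).1 x hx q (hySsub hq)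
  have hyr : ∀ i, ys i ∈ Set.range Y := by
    intro i
    induction i using Fin.induction with
    | zero => exact mem_rangeY_of_cr ⟨x, h0⟩
    | succ j ih =>
      obtain ⟨z, hz1, hz2⟩ := nonempty_of_ratio hm hδ (hr j)
      exact mem_rangeY_of_cr ⟨z, hz1⟩
  choose u hu hus using fun i => hF.2.2.2 (ys i) (hyr i)
  have hbig : ∀ i : Fin N,
      δ * mX (Set.range X) < mX (condRange X Y (ys i.succ) ∩ condRange X Y (ys i.castSucc)) :=
    fun i => (lt_div_iff₀ hrX).mp (hr i)
  have hstep : ∀ i : Fin N, u i.succ = u i.castSucc := by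
    intro i
    have h2 : condRange X Y (ys i.succ) ∩ condRange X Y (ys i.castSucc) ⊆
        u i.succ ∩ u i.castSucc := fun z hz => ⟨hus _ hz.1, hus _ hz.2⟩
    exact eq_of_big_inter hF (hu _) (hu _) ((hbig i).trans_le (uMono hm h2))
  have hconst : ∀ i, u i = u 0 := by
    intro i
    induction i using Fin.induction with
    | zero => rfl
    | succ j ih => rw [hstep j, ih]
  have hend : u (Fin.last N) = S := by
    by_cases h : ys (Fin.last N) = yS
    · exact member_unique hm hδ hrX hkey hF hyS (hu _) hS (h ▸ hus (Fin.last N)) hySsub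
    · have hne : (condRange X Y (ys (Fin.last N)) ∩ condRange X Y yS).Nonempty := ⟨q, hN, hq⟩
      have h1 := hkey _ _ (hyr _) hyS h hne
      have h2 : condRange X Y (ys (Fin.last N)) ∩ condRange X Y yS ⊆ u (Fin.last N) ∩ S :=
        fun z hz => ⟨hus _ hz.1, hySsub hz.2⟩
      exact eq_of_big_inter hF (hu _) hS (h1.trans_le (uMono hm h2))
  have hu0 : u 0 = S := (hconst (Fin.last N)).symm.trans hend
  by_cases h : ys 0 = a
  · rw [← h, ← hu0]; exact hus 0
  · obtain ⟨W, hW, hWs⟩ := hF.2.2.2 a ha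
    have hne : (condRange X Y (ys 0) ∩ condRange X Y a).Nonempty := ⟨x, h0, hxa⟩
    have h1 := hkey _ _ (hyr 0) ha h hne
    have h2 : condRange X Y (ys 0) ∩ condRange X Y a ⊆ u 0 ∩ W :=
      fun z hz => ⟨hus _ hz.1, hWs hz.2⟩
    have hUW : u 0 = W := eq_of_big_inter hF (hu 0) hW (h1.trans_le (uMono hm h2))
    rw [← hu0, hUW]; exact hWs

include hm hδ hrX hkey hF in
lemma mem_of_conn {S : Set 𝒳} {x x' : 𝒳} (hS : S ∈ F) (hx : x ∈ S)
    (hc : Conn mX X Y δ x x') : x' ∈ S := by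
  obtain ⟨N, ys, h0, hN, hr⟩ := hc
  have hsub : ∀ i, condRange X Y (ys i) ⊆ S := by
    intro i
    induction i using Fin.induction with
    | zero => exact cr_subset_of_mem hm hδ hrX hkey hF hS hx (mem_rangeY_of_cr ⟨x, h0⟩) h0
    | succ j ih =>
      obtain ⟨z, hz1, hz2⟩ := nonempty_of_ratio hm hδ (hr j)
      exact cr_subset_of_mem hm hδ hrX hkey hF hS (ih hz2) (mem_rangeY_of_cr ⟨z, hz1⟩) hz1
  exact hsub (Fin.last N) hN

end Family

/-- Theorem 2: under disassociation at `(δ, δ₂)` the `δ`-overlap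
family of `⟦X⟧` is unique, it is a `δ`-isolated partition, and it is the
`δ`-isolated partition of largest cardinality, with equality of cardinalities only
for the family itself. -/
theorem disassociated_overlapFamily_unique_and_maximal
    {Ω 𝒳 𝒴 : Type*} (mX : Set 𝒳 → ℝ) (mY : Set 𝒴 → ℝ)
    (hmX : IsUncertaintyFn mX) (hmY : IsUncertaintyFn mY)
    (X : Ω → 𝒳) (Y : Ω → 𝒴) (δ δ₂ : ℝ)
    (hδ : 0 ≤ δ) (hδ' : δ < 1) (hδ₂ : 0 ≤ δ₂) (hδ₂' : δ₂ < 1)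
    (hd : Disassociated mX mY X Y δ δ₂) :
    (∀ F₁ F₂ : Set (Set 𝒳), IsOverlapFamily mX X Y δ F₁ →
      IsOverlapFamily mX X Y δ F₂ → F₁ = F₂) ∧
    ∀ F P : Set (Set 𝒳), IsOverlapFamily mX X Y δ F → F.Finite →
      IsIsolatedPartition mX X Y δ P → P.Finite →
      IsIsolatedPartition mX X Y δ F ∧ P.ncard ≤ F.ncard ∧
        (P.ncard = F.ncard ↔ P = F) := by
  classical
  -- basic facts from disassociation
  have hrX : 0 < mX (Set.range X) := by
    obtain ⟨r, hrne, y₁, _, y₂, _, _, rfl⟩ := hd.1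
    have hne : mX (Set.range X) ≠ 0 := fun h => hrne (by rw [h, div_zero])
    rcases Set.eq_empty_or_nonempty (Set.range X) with h | h
    · exact absurd (h ▸ hmX.1) hne
    · exact hmX.2.1 _ h
  have hkey : ∀ a b : 𝒴, a ∈ Set.range Y → b ∈ Set.range Y → a ≠ b →
      (condRange X Y a ∩ condRange X Y b).Nonempty →
      δ * mX (Set.range X) < mX (condRange X Y a ∩ condRange X Y b) := by
    intro a b ha hb hab hne
    have hpos := hmX.2.1 _ hne
    have hmem : mX (condRange X Y a ∩ condRange X Y b) / mX (Set.range X) ∈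
        assocSet mX X Y := ⟨ne_of_gt (div_pos hpos hrX), a, ha, b, hb, hab, rfl⟩
    exact (lt_div_iff₀ hrX).mp (hd.2.1 _ hmem)
  -- uniqueness
  have huniq : ∀ F₁ F₂ : Set (Set 𝒳), IsOverlapFamily mX X Y δ F₁ →
      IsOverlapFamily mX X Y δ F₂ → F₁ ⊆ F₂ := by
    intro F₁ F₂ h₁ h₂ S hS
    obtain ⟨yS, hyS, hsub⟩ := (h₁.2.1 S hS).2
    obtain ⟨x, hx⟩ := cr_nonempty (X := X) hyS
    have hxS : x ∈ S := hsub hx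
    have hxX : x ∈ Set.range X := h₁.1 ▸ ⟨S, hS, hxS⟩
    obtain ⟨T, hT, hxT⟩ : ∃ T ∈ F₂, x ∈ T := by
      have : x ∈ ⋃₀ F₂ := h₂.1.symm ▸ hxX
      obtain ⟨T, hT, hxT⟩ := this
      exact ⟨T, hT, hxT⟩
    have hST : S = T := by
      ext x'
      constructor
      · intro hx'
        exact mem_of_conn hmX hδ hrX hkey h₂ hT hxT ((h₁.2.1 S hS).1 x hxS x' hx')
      · intro hx'
        exact mem_of_conn hmX hδ hrX hkey h₁ hS hxS ((h₂.2.1 T hT).1 x hxT x' hx')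
    exact hST ▸ hT
  refine ⟨fun F₁ F₂ h₁ h₂ => subset_antisymm (huniq F₁ F₂ h₁ h₂) (huniq F₂ F₁ h₂ h₁), ?_⟩
  intro F P hF hFfin hP hPfin
  -- F is a δ-isolated partition
  have hne : ∀ S ∈ F, S.Nonempty := by
    intro S hS
    obtain ⟨yS, hyS, hsub⟩ := (hF.2.1 S hS).2
    exact (cr_nonempty (X := X) hyS).mono hsub
  have hdisj : ∀ S₁ ∈ F, ∀ S₂ ∈ F, S₁ ≠ S₂ → Disjoint S₁ S₂ := by
    intro S hS T hT hne'
    rw [Set.disjoint_left]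
    intro x hxS hxT
    apply hne'
    ext x'
    constructor
    · intro hx'
      exact mem_of_conn hmX hδ hrX hkey hF hT hxT ((hF.2.1 S hS).1 x hxS x' hx')
    · intro hx'
      exact mem_of_conn hmX hδ hrX hkey hF hS hxS ((hF.2.1 T hT).1 x hxT x' hx')
  have hisoF : IsIsolatedPartition mX X Y δ F := by
    refine ⟨hF.1, hne, hdisj, ?_⟩
    intro S hS T hT hne' x₁ hx₁ x₂ hx₂ hc
    have hx₂S : x₂ ∈ S := mem_of_conn hmX hδ hrX hkey hF hS hx₁ hc
    exact Set.disjoint_left.mp (hdisj S hS T hT hne') hx₂S hx₂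
  -- the map from F to P
  have hmap : ∀ S : Set 𝒳, ∃ B : Set 𝒳, S ∈ F → B ∈ P ∧ S ⊆ B := by
    intro S
    by_cases hS : S ∈ F
    · obtain ⟨x, hx⟩ := hne S hS
      have hxF : x ∈ ⋃₀ F := ⟨S, hS, hx⟩
      have hxX : x ∈ ⋃₀ P := by rw [hP.1, ← hF.1]; exact hxF
      obtain ⟨B, hB, hxB⟩ := hxX
      refine ⟨B, fun _ => ⟨hB, ?_⟩⟩
      intro x' hx'
      have hx'F : x' ∈ ⋃₀ F := ⟨S, hS, hx'⟩
      have hx'X : x' ∈ ⋃₀ P := by rw [hP.1, ← hF.1]; exact hx'F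
      obtain ⟨B', hB', hxB'⟩ := hx'X
      have hBB : B' = B := by
        by_contra hbb
        exact hP.2.2.2 B' hB' B hB hbb x' hxB' x hxB
          ((hF.2.1 S hS).1 x' hx' x hx)
      exact hBB ▸ hxB'
    · exact ⟨∅, fun h => absurd h hS⟩
  choose f hf using hmap
  have hfP : ∀ S ∈ F, f S ∈ P := fun S hS => (hf S hS).1
  have hfsub : ∀ S ∈ F, S ⊆ f S := fun S hS => (hf S hS).2
  -- f is surjective from F onto P
  have hsurj : P ⊆ f '' F := by
    intro B hB
    obtain ⟨x, hx⟩ := hP.2.1 B hB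
    have hxP : x ∈ ⋃₀ P := ⟨B, hB, hx⟩
    have hxX : x ∈ ⋃₀ F := by rw [hF.1, ← hP.1]; exact hxP
    obtain ⟨S, hS, hxS⟩ := hxX
    refine ⟨S, hS, ?_⟩
    by_contra hfb
    exact Set.disjoint_left.mp (hP.2.2.1 (f S) (hfP S hS) B hB hfb)
      (hfsub S hS hxS) hx
  have hPeq : P = f '' F := subset_antisymm hsurj (by
    rintro _ ⟨S, hS, rfl⟩; exact hfP S hS)
  have hcard : P.ncard ≤ F.ncard := by
    rw [hPeq]
    exact Set.ncard_image_le hFfin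
  refine ⟨hisoF, hcard, ?_, fun h => h ▸ rfl⟩
  intro hcardeq
  have hinj : Set.InjOn f F := by
    apply Set.injOn_of_ncard_image_eq _ hFfin
    rw [← hPeq, hcardeq]
  have hPF : P ⊆ F := by
    intro B hB
    obtain ⟨S, hS, rfl⟩ := hsurj hB
    have : f S = S := by
      apply subset_antisymm _ (hfsub S hS)
      intro x hx
      have hxP : x ∈ ⋃₀ P := ⟨f S, hB, hx⟩
      have hxX : x ∈ ⋃₀ F := by rw [hF.1, ← hP.1]; exact hxP
      obtain ⟨S', hS', hxS'⟩ := hxX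
      have hff : f S' = f S := by
        by_contra hfb
        exact Set.disjoint_left.mp (hP.2.2.1 (f S') (hfP S' hS') (f S) hB hfb)
          (hfsub S' hS' hxS') hx
      rw [← hinj hS' hS hff]
      exact hxS'
    rw [this]
    exact hS
  exact Set.eq_of_subset_of_ncard_le hPF (le_of_eq hcardeq.symm) hFfin


end NSIT
end

section
/- Let X and Y be uncertain variables, and let δ* = (min over y ∈ ⟦Y⟧ of m_𝒳(⟦X|y⟧))/m_𝒳(⟦X⟧). If δ₁ < δ*, then the cardinality of any δ₁-overlap family of ⟦X⟧ satisfies |⟦X|Y⟧*_{δ₁}| ≤ |⟦Y⟧|. -/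
open Set Real

namespace NSIT

variable {Ω 𝒳 𝒴 : Type*}

/-- Lemma 3: if `δ₁ < δ* = (min_{y ∈ ⟦Y⟧} m_𝒳(⟦X|y⟧))/m_𝒳(⟦X⟧)`,
then any `δ₁`-overlap family of `⟦X⟧` has cardinality at most `|⟦Y⟧|`. -/
theorem overlapFamily_card_le
    {Ω 𝒳 𝒴 : Type*} (mX : Set 𝒳 → ℝ) (mY : Set 𝒴 → ℝ)
    (hmX : IsUncertaintyFn mX) (hmY : IsUncertaintyFn mY)
    (X : Ω → 𝒳) (Y : Ω → 𝒴) (δ₁ : ℝ)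
    (hYfin : (Set.range Y).Finite)
    (hδ₁ : δ₁ < sInf {r | ∃ y ∈ Set.range Y, r = mX (condRange X Y y)} /
      mX (Set.range X))
    (F : Set (Set 𝒳)) (hF : IsOverlapFamily mX X Y δ₁ F) :
    F.Finite ∧ F.ncard ≤ (Set.range Y).ncard := by
  rcases F.eq_empty_or_nonempty with hFe | ⟨S₀, hS₀⟩
  · subst hFe; simp
  obtain ⟨_, hmem, hover, _⟩ := hF
  obtain ⟨y₀, hy₀, -⟩ := (hmem S₀ hS₀).2
  haveI : Nonempty 𝒴 := ⟨y₀⟩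
  classical
  -- the choice function
  set g : Set 𝒳 → 𝒴 := fun S =>
    if h : ∃ y ∈ Set.range Y, condRange X Y y ⊆ S then h.choose
    else Classical.arbitrary 𝒴 with hg
  have hgspec : ∀ S ∈ F, g S ∈ Set.range Y ∧ condRange X Y (g S) ⊆ S := by
    intro S hS
    have h := (hmem S hS).2
    simp only [hg, dif_pos h]
    exact ⟨h.choose_spec.1, h.choose_spec.2⟩
  -- positivity of mX on range X
  have hXne : (Set.range X).Nonempty := by
    obtain ⟨ω, hω⟩ := hy₀
    exact ⟨X ω, ⟨ω, rfl⟩⟩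
  have hmXpos : 0 < mX (Set.range X) := hmX.2.1 _ hXne
  -- monotonicity
  have hmono : ∀ A B : Set 𝒳, A ⊆ B → mX A ≤ mX B := by
    intro A B hAB
    have := hmX.2.2 A B
    rw [Set.union_eq_self_of_subset_left hAB] at this
    exact le_trans (le_max_left _ _) this
  -- the inf bound
  have hinf : ∀ y ∈ Set.range Y, δ₁ * mX (Set.range X) < mX (condRange X Y y) := by
    intro y hy
    have hmemr : mX (condRange X Y y) ∈
        {r | ∃ y ∈ Set.range Y, r = mX (condRange X Y y)} := ⟨y, hy, rfl⟩
    have hfin : {r | ∃ y ∈ Set.range Y, r = mX (condRange X Y y)}.Finite := by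
      have : {r | ∃ y ∈ Set.range Y, r = mX (condRange X Y y)} ⊆
          (fun y => mX (condRange X Y y)) '' (Set.range Y) := by
        rintro r ⟨y, hy, rfl⟩; exact ⟨y, hy, rfl⟩
      exact (hYfin.image _).subset this
    have hle : sInf {r | ∃ y ∈ Set.range Y, r = mX (condRange X Y y)}
        ≤ mX (condRange X Y y) := csInf_le hfin.bddBelow hmemr
    have hdiv : sInf {r | ∃ y ∈ Set.range Y, r = mX (condRange X Y y)} /
        mX (Set.range X) ≤ mX (condRange X Y y) / mX (Set.range X) := by
      gcongr
    linarith [(lt_div_iff₀ hmXpos).mp (hδ₁.trans_le hdiv)]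
  -- injectivity
  have hinj : Set.InjOn g F := by
    intro S₁ hS₁ S₂ hS₂ heq
    by_contra hne
    obtain ⟨hgy₁, hsub₁⟩ := hgspec S₁ hS₁
    obtain ⟨hgy₂, hsub₂⟩ := hgspec S₂ hS₂
    have hsub : condRange X Y (g S₁) ⊆ S₁ ∩ S₂ :=
      Set.subset_inter hsub₁ (heq ▸ hsub₂)
    have h1 : mX (condRange X Y (g S₁)) ≤ mX (S₁ ∩ S₂) := hmono _ _ hsub
    have h2 : mX (S₁ ∩ S₂) ≤ δ₁ * mX (Set.range X) := hover S₁ hS₁ S₂ hS₂ hne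
    have h3 := hinf (g S₁) hgy₁
    linarith
  have himg : g '' F ⊆ Set.range Y := by
    rintro _ ⟨S, hS, rfl⟩; exact (hgspec S hS).1
  have hFfin : F.Finite :=
    Set.Finite.of_finite_image ((hYfin.subset himg)) hinj
  refine ⟨hFfin, ?_⟩
  calc F.ncard = (g '' F).ncard := (Set.ncard_image_of_injOn hinj).symm
    _ ≤ (Set.range Y).ncard := Set.ncard_le_ncard himg hYfin


end NSIT
end

section
/- Let X and Y be uncertain variables with δ* = (min over y ∈ ⟦Y⟧ of m_𝒳(⟦X|y⟧))/m_𝒳(⟦X⟧). For all δ₁ < δ* and δ₂ ≤ 1, if X and Y are associated at levels (δ₁, δ₂), then the family of conditional ranges ⟦X|Y⟧ is a δ₁-overlap family and |⟦X|Y⟧*_{δ₁}| = |⟦Y⟧| (each y yields a distinct member of the overlap family). -/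
open Set Real

namespace NSIT

variable {Ω 𝒳 𝒴 : Type*}

/-- Lemma 4: if `δ₁ < δ*`, `δ₂ ≤ 1` and `X`, `Y` are associated at
levels `(δ₁, δ₂)`, then the family of conditional ranges `⟦X|Y⟧` is a
`δ₁`-overlap family and its cardinality equals `|⟦Y⟧|`. -/
theorem associated_condRange_overlapFamily_card
    {Ω 𝒳 𝒴 : Type*} (mX : Set 𝒳 → ℝ) (mY : Set 𝒴 → ℝ)
    (hmX : IsUncertaintyFn mX) (hmY : IsUncertaintyFn mY)
    (X : Ω → 𝒳) (Y : Ω → 𝒴) (δ₁ δ₂ : ℝ)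
    (hYfin : (Set.range Y).Finite)
    (hδ₁0 : 0 ≤ δ₁)
    (hδ₁ : δ₁ < sInf {r | ∃ y ∈ Set.range Y, r = mX (condRange X Y y)} /
      mX (Set.range X))
    (hδ₂0 : 0 ≤ δ₂) (hδ₂ : δ₂ ≤ 1)
    (h : Associated mX mY X Y δ₁ δ₂) :
    IsOverlapFamily mX X Y δ₁ {S | ∃ y ∈ Set.range Y, S = condRange X Y y} ∧
    {S | ∃ y ∈ Set.range Y, S = condRange X Y y}.ncard =
      (Set.range Y).ncard := by
  obtain ⟨hm0, hmpos, hmtrans⟩ := hmX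
  set F : Set (Set 𝒳) := {S | ∃ y ∈ Set.range Y, S = condRange X Y y} with hF
  have hFimg : F = (fun y => condRange X Y y) '' Set.range Y := by
    ext S; simp [hF, eq_comm]
  rcases (Set.range Y).eq_empty_or_nonempty with hY | hY
  · have hΩ : IsEmpty Ω := Set.range_eq_empty_iff.mp hY
    have hX : Set.range X = ∅ := Set.range_eq_empty_iff.mpr hΩ
    have hFe : F = ∅ := by simp [hFimg, hY]
    refine ⟨⟨?_, ?_, ?_, ?_⟩, ?_⟩ <;> simp [hFe, hX, hY]
  · obtain ⟨y0, ω0, hω0⟩ := hY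
    have hXne : (Set.range X).Nonempty := ⟨X ω0, ω0, rfl⟩
    have hM : 0 < mX (Set.range X) := hmpos _ hXne
    -- each conditional range (for y in range Y) is nonempty
    have hne : ∀ y ∈ Set.range Y, (condRange X Y y).Nonempty := by
      rintro y ⟨ω, rfl⟩
      exact ⟨X ω, ω, rfl, rfl⟩
    have hnonneg : ∀ S : Set 𝒳, 0 ≤ mX S := by
      intro S
      rcases S.eq_empty_or_nonempty with rfl | hS
      · rw [hm0]
      · exact (hmpos _ hS).le
    -- overlap bound
    have hovl : ∀ y₁ ∈ Set.range Y, ∀ y₂ ∈ Set.range Y, y₁ ≠ y₂ →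
        mX (condRange X Y y₁ ∩ condRange X Y y₂) ≤ δ₁ * mX (Set.range X) := by
      intro y₁ hy₁ y₂ hy₂ hne12
      by_cases hz : mX (condRange X Y y₁ ∩ condRange X Y y₂) = 0
      · rw [hz]; positivity
      · have hr : mX (condRange X Y y₁ ∩ condRange X Y y₂) / mX (Set.range X) ∈
            assocSet mX X Y := by
          exact ⟨div_ne_zero hz hM.ne', y₁, hy₁, y₂, hy₂, hne12, rfl⟩
        have := h.1 _ hr
        rwa [div_le_iff₀ hM] at this
    -- sInf bound
    have hSfin : {r | ∃ y ∈ Set.range Y, r = mX (condRange X Y y)}.Finite := by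
      have : {r | ∃ y ∈ Set.range Y, r = mX (condRange X Y y)} =
          (fun y => mX (condRange X Y y)) '' Set.range Y := by
        ext r; simp [eq_comm]
      rw [this]; exact hYfin.image _
    have hInf_le : ∀ y ∈ Set.range Y,
        sInf {r | ∃ y ∈ Set.range Y, r = mX (condRange X Y y)} ≤
          mX (condRange X Y y) := by
      intro y hy
      exact csInf_le hSfin.bddBelow ⟨y, hy, rfl⟩
    have hδM : δ₁ * mX (Set.range X) <
        sInf {r | ∃ y ∈ Set.range Y, r = mX (condRange X Y y)} := by
      rw [lt_div_iff₀ hM] at hδ₁; linarith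
    -- injectivity of y ↦ condRange y on range Y
    have hinj : Set.InjOn (fun y => condRange X Y y) (Set.range Y) := by
      intro y₁ hy₁ y₂ hy₂ heq
      by_contra hne12
      have h1 := hovl y₁ hy₁ y₂ hy₂ hne12
      simp only at heq
      rw [heq, Set.inter_self] at h1
      have h2 := hInf_le y₂ hy₂
      linarith [hδM]
    constructor
    · refine ⟨?_, ?_, ?_, ?_⟩
      · apply Set.eq_of_subset_of_subset
        · rintro x ⟨S, ⟨y, hy, rfl⟩, hx⟩
          obtain ⟨ω, _, rfl⟩ := hx
          exact ⟨ω, rfl⟩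
        · rintro x ⟨ω, rfl⟩
          exact ⟨condRange X Y (Y ω), ⟨Y ω, ⟨ω, rfl⟩, rfl⟩, ⟨ω, rfl, rfl⟩⟩
      · rintro S ⟨y, hy, rfl⟩
        refine ⟨?_, y, hy, le_refl _⟩
        intro x₁ hx₁ x₂ hx₂
        exact ⟨0, fun _ => y, hx₁, hx₂, fun i => i.elim0⟩
      · rintro S₁ ⟨y₁, hy₁, rfl⟩ S₂ ⟨y₂, hy₂, rfl⟩ hne12
        have : y₁ ≠ y₂ := fun hyy => hne12 (by rw [hyy])
        exact hovl y₁ hy₁ y₂ hy₂ this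
      · intro y hy
        exact ⟨condRange X Y y, ⟨y, hy, rfl⟩, le_refl _⟩
    · rw [hFimg]
      exact Set.ncard_image_of_injOn hinj

end NSIT
end

section
/- Let X, Y be uncertain variables with ⟦Y⟧ finite, δ* = (min over y ∈ ⟦Y⟧ of m_𝒳(⟦X|y⟧))/m_𝒳(⟦X⟧), and suppose the uncertainty function m_𝒳 is subadditive under finite unions (m(S₁∪S₂) ≤ m(S₁)+m(S₂)). If δ₁ < δ* and X and Y are associated at levels (δ₁/|⟦Y⟧|, δ₂), then for every y ∈ ⟦Y⟧ there exists a point x ∈ ⟦X|y⟧ such that x ∉ ⟦X|y′⟧ for every other conditional range ⟦X|y′⟧ ≠ ⟦X|y⟧. (Each conditional range has a point not covered by any other conditional range.) -/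
open Set Real

namespace NSIT

variable {Ω 𝒳 𝒴 : Type*}

/-! If `⟦X|y⟧` had no private point, it would be covered by its intersections with the
other conditional ranges. There are fewer than `|⟦Y⟧|` of them, each of uncertainty at most
`δ₁/|⟦Y⟧| · m(⟦X⟧)` by association, so subadditivity gives `m(⟦X|y⟧) ≤ δ₁ · m(⟦X⟧)`,
contradicting `δ₁ < δ*`. -/

namespace IsUncertaintyFn

variable {m : Set 𝒳 → ℝ}

theorem nonneg_s9 (hm : IsUncertaintyFn m) (S : Set 𝒳) : 0 ≤ m S := by
  rcases S.eq_empty_or_nonempty with rfl | hS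
  · exact hm.1.ge
  · exact (hm.2.1 S hS).le

theorem mono (hm : IsUncertaintyFn m) {A B : Set 𝒳} (hAB : A ⊆ B) : m A ≤ m B := by
  simpa [union_eq_right.mpr hAB] using hm.2.2 A B

theorem biUnion_le_sum {ι : Type*} (hm : IsUncertaintyFn m)
    (hsub : ∀ S₁ S₂ : Set 𝒳, m (S₁ ∪ S₂) ≤ m S₁ + m S₂) (s : Finset ι) (f : ι → Set 𝒳) :
    m (⋃ i ∈ s, f i) ≤ ∑ i ∈ s, m (f i) := by
  classical
  induction s using Finset.induction_on with
  | empty => simp [hm.1]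
  | insert a s ha ih =>
    rw [Finset.set_biUnion_insert, Finset.sum_insert ha]
    exact (hsub _ _).trans (add_le_add_right ih _)

theorem le_card_mul_of_subset_biUnion {ι : Type*} (hm : IsUncertaintyFn m)
    (hsub : ∀ S₁ S₂ : Set 𝒳, m (S₁ ∪ S₂) ≤ m S₁ + m S₂) {A : Set 𝒳} {s : Finset ι}
    {f : ι → Set 𝒳} {b : ℝ} (hA : A ⊆ ⋃ i ∈ s, f i) (hf : ∀ i ∈ s, m (f i) ≤ b) :
    m A ≤ s.card * b :=
  calc m A ≤ m (⋃ i ∈ s, f i) := hm.mono hA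
    _ ≤ ∑ i ∈ s, m (f i) := hm.biUnion_le_sum hsub s f
    _ ≤ s.card * b := by simpa using Finset.sum_le_sum hf

end IsUncertaintyFn

theorem condRange_nonempty {X : Ω → 𝒳} {Y : Ω → 𝒴} {y : 𝒴} (hy : y ∈ range Y) :
    (condRange X Y y).Nonempty := by
  obtain ⟨ω, rfl⟩ := hy
  exact ⟨X ω, ω, rfl, rfl⟩

theorem sInf_le_condRange {mX : Set 𝒳 → ℝ} (hmX : IsUncertaintyFn mX) {X : Ω → 𝒳}
    {Y : Ω → 𝒴} {y : 𝒴} (hy : y ∈ range Y) :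
    sInf {r | ∃ y ∈ range Y, r = mX (condRange X Y y)} ≤ mX (condRange X Y y) := by
  refine csInf_le ⟨0, ?_⟩ ⟨y, hy, rfl⟩
  rintro r ⟨y', -, rfl⟩
  exact hmX.nonneg_s9 _

theorem IsUncertaintyFn.condRange_le_ncard_mul {mX : Set 𝒳 → ℝ} (hmX : IsUncertaintyFn mX)
    (hsub : ∀ S₁ S₂ : Set 𝒳, mX (S₁ ∪ S₂) ≤ mX S₁ + mX S₂) {X : Ω → 𝒳} {Y : Ω → 𝒴}
    (hYfin : (range Y).Finite) {y : 𝒴} {b : ℝ} (hb : 0 ≤ b)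
    (hcover : ∀ x ∈ condRange X Y y, ∃ y' ∈ range Y, y' ≠ y ∧ x ∈ condRange X Y y')
    (hinter : ∀ y' ∈ range Y, y' ≠ y → mX (condRange X Y y ∩ condRange X Y y') ≤ b) :
    mX (condRange X Y y) ≤ (range Y).ncard * b := by
  classical
  set S := hYfin.toFinset.filter (· ≠ y)
  have hS : ∀ {y'}, y' ∈ S ↔ y' ∈ range Y ∧ y' ≠ y := by simp [S]
  have hcard : (S.card : ℝ) ≤ (range Y).ncard := by
    rw [ncard_eq_toFinset_card _ hYfin]
    exact_mod_cast Finset.card_filter_le _ _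
  calc mX (condRange X Y y) ≤ S.card * b := by
        refine hmX.le_card_mul_of_subset_biUnion hsub (f := fun y' => condRange X Y y ∩
          condRange X Y y') (fun x hx => ?_) fun y' hy' => hinter y' (hS.1 hy').1 (hS.1 hy').2
        obtain ⟨y', hy', hne, hxy'⟩ := hcover x hx
        exact mem_biUnion (hS.2 ⟨hy', hne⟩) ⟨hx, hxy'⟩
    _ ≤ (range Y).ncard * b := by gcongr

/-- The `max` absorbs the case `δ < 0`, where association forces every such intersection
to be null. -/
theorem inter_le_of_forall_assocSet_le {mX : Set 𝒳 → ℝ} {X : Ω → 𝒳} {Y : Ω → 𝒴} {δ : ℝ}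
    (hδ : ∀ r ∈ assocSet mX X Y, r ≤ δ) (hM : 0 < mX (range X)) {y₁ y₂ : 𝒴}
    (hy₁ : y₁ ∈ range Y) (hy₂ : y₂ ∈ range Y) (hne : y₁ ≠ y₂) :
    mX (condRange X Y y₁ ∩ condRange X Y y₂) ≤ max δ 0 * mX (range X) := by
  set r := mX (condRange X Y y₁ ∩ condRange X Y y₂) / mX (range X)
  have hr : mX (condRange X Y y₁ ∩ condRange X Y y₂) = r * mX (range X) :=
    (div_mul_cancel₀ _ hM.ne').symm
  rw [hr]
  by_cases hr0 : r = 0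
  · rw [hr0, zero_mul]
    positivity
  · exact mul_le_mul_of_nonneg_right
      ((hδ r ⟨hr0, y₁, hy₁, y₂, hy₂, hne, rfl⟩).trans (le_max_left _ _)) hM.le

theorem exists_private_point_general
    {Ω 𝒳 𝒴 : Type*} (mX : Set 𝒳 → ℝ) (mY : Set 𝒴 → ℝ)
    (hmX : IsUncertaintyFn mX)
    (hsub : ∀ S₁ S₂ : Set 𝒳, mX (S₁ ∪ S₂) ≤ mX S₁ + mX S₂)
    (X : Ω → 𝒳) (Y : Ω → 𝒴) (δ₁ δ₂ : ℝ)
    (hYfin : (Set.range Y).Finite)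
    (hδ₁ : δ₁ < sInf {r | ∃ y ∈ Set.range Y, r = mX (condRange X Y y)} /
      mX (Set.range X))
    (h : Associated mX mY X Y (δ₁ / ((Set.range Y).ncard : ℝ)) δ₂) :
    ∀ y ∈ Set.range Y, ∃ x ∈ condRange X Y y,
      ∀ y' ∈ Set.range Y, condRange X Y y' ≠ condRange X Y y →
        x ∉ condRange X Y y' := by
  intro y hy
  by_contra! hcon
  have hn : (0 : ℝ) < (range Y).ncard := by exact_mod_cast (ncard_pos hYfin).mpr ⟨y, hy⟩
  set n : ℝ := ((range Y).ncard : ℝ)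
  set M := mX (range X)
  have hM : 0 < M := hmX.2.1 _ ((condRange_nonempty hy).mono (image_subset_range _ _))
  have hupper : mX (condRange X Y y) ≤ max δ₁ 0 * M :=
    calc mX (condRange X Y y) ≤ n * (max (δ₁ / n) 0 * M) := by
          refine hmX.condRange_le_ncard_mul hsub hYfin (by positivity) (fun x hx => ?_)
            fun y' hy' hne => inter_le_of_forall_assocSet_le h.1 hM hy hy' hne.symm
          obtain ⟨y', hy', hne, hxy'⟩ := hcon x hx
          exact ⟨y', hy', fun hyy' => hne (hyy' ▸ rfl), hxy'⟩
      _ = max δ₁ 0 * M := by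
          rw [← mul_assoc, mul_max_of_nonneg _ _ hn.le, mul_div_cancel₀ _ hn.ne', mul_zero]
  have hlower : δ₁ * M < mX (condRange X Y y) :=
    ((lt_div_iff₀ hM).mp hδ₁).trans_le (sInf_le_condRange hmX hy)
  have hpos : 0 < mX (condRange X Y y) := hmX.2.1 _ (condRange_nonempty hy)
  rcases max_choice δ₁ 0 with hmax | hmax <;> rw [hmax] at hupper <;> linarith

/-- Lemma 7: suppose `m_𝒳` is subadditive under unions, `⟦Y⟧` is
finite, `δ₁ < δ*`, and `X`, `Y` are associated at levels `(δ₁/|⟦Y⟧|, δ₂)`.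
Then every conditional range `⟦X|y⟧` contains a point belonging to no other
conditional range. -/
theorem exists_private_point
    {Ω 𝒳 𝒴 : Type*} (mX : Set 𝒳 → ℝ) (mY : Set 𝒴 → ℝ)
    (hmX : IsUncertaintyFn mX) (hmY : IsUncertaintyFn mY)
    (hsub : ∀ S₁ S₂ : Set 𝒳, mX (S₁ ∪ S₂) ≤ mX S₁ + mX S₂)
    (X : Ω → 𝒳) (Y : Ω → 𝒴) (δ₁ δ₂ : ℝ)
    (hYfin : (Set.range Y).Finite)
    (hδ₁ : δ₁ < sInf {r | ∃ y ∈ Set.range Y, r = mX (condRange X Y y)} /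
      mX (Set.range X))
    (h : Associated mX mY X Y (δ₁ / ((Set.range Y).ncard : ℝ)) δ₂) :
    ∀ y ∈ Set.range Y, ∃ x ∈ condRange X Y y,
      ∀ y' ∈ Set.range Y, condRange X Y y' ≠ condRange X Y y →
        x ∉ condRange X Y y' :=
  exists_private_point_general mX mY hmX hsub X Y δ₁ δ₂ hYfin hδ₁ h

end NSIT
end

section
/- Under the product uncertainty assumption, let X(1:n) and Y(1:n) be uncertain variables with factorized ranges as above, let 0 ≤ δ < min over coordinates i and x(i) ∈ ⟦X(i)⟧ of m_𝒴(⟦Y(i)|x(i)⟧), and suppose m_𝒴(𝒴) = 1 with ⟦Y(i)⟧ ⊆ 𝒴. Then for any two distinct sets 𝒮₁, 𝒮₂ in the product family ∏_{i=1}^n ⟦Y(i)|X(i)⟧*_δ (differing in some coordinate i*), we have m_𝒴(𝒮₁ ∩ 𝒮₂)/m_𝒴(⟦Y(1:n)⟧) ≤ δ · (δ̂(n))^{n−1}, where δ̂(n) = max over coordinates i and members 𝒮 ∈ ⟦Y(i)|X(i)⟧*_δ of m_𝒴(𝒮)/m_𝒴(⟦Y(i)⟧). -/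
open Set Real

namespace NSIT

variable {Ω 𝒳 𝒴 : Type*}

/-- Lemma 2, part 4: under the product uncertainty assumption with
`m_𝒴(𝒴ⁿ) = 1`, any two sets of the product family differing in some coordinate
have relative overlap at most `δ · δ̂(n)^{n-1}`, where `δ̂(n)` is the maximal
relative uncertainty of a member of a per-coordinate `δ`-overlap family. -/
theorem product_family_pairwise_overlap
    {Ω 𝒳 𝒴 : Type*} {n : ℕ}
    (m1 : Set 𝒴 → ℝ) (mn : Set (Fin n → 𝒴) → ℝ)
    (hm1 : IsUncertaintyFn m1) (hmn : IsUncertaintyFn mn)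
    (hprod : ∀ S : Fin n → Set 𝒴, mn (Set.univ.pi S) = ∏ i, m1 (S i))
    (hmnuniv : mn Set.univ = 1)
    (Xv : Ω → Fin n → 𝒳) (Yv : Ω → Fin n → 𝒴) (δ : ℝ)
    (hX : Set.range Xv = Set.univ.pi fun i => Set.range fun ω => Xv ω i)
    (hY : ∀ xv ∈ Set.range Xv,
      condRange Yv Xv xv =
        Set.univ.pi fun i =>
          condRange (fun ω => Yv ω i) (fun ω => Xv ω i) (xv i))
    (hδ0 : 0 ≤ δ)
    (hδ : δ < sInf {r | ∃ i : Fin n, ∃ x ∈ Set.range fun ω => Xv ω i,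
      r = m1 (condRange (fun ω => Yv ω i) (fun ω => Xv ω i) x)})
    (F : Fin n → Set (Set 𝒴))
    (hF : ∀ i, IsOverlapFamily m1 (fun ω => Yv ω i) (fun ω => Xv ω i) δ (F i))
    (g₁ g₂ : Fin n → Set 𝒴)
    (hg₁ : ∀ i, g₁ i ∈ F i) (hg₂ : ∀ i, g₂ i ∈ F i)
    (hne : ∃ i, g₁ i ≠ g₂ i) :
    mn (Set.univ.pi g₁ ∩ Set.univ.pi g₂) / mn (Set.range Yv) ≤
      δ * (sSup {r | ∃ i : Fin n, ∃ S ∈ F i,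
        r = m1 S / m1 (Set.range fun ω => Yv ω i)}) ^ (n - 1) := by
  classical
  obtain ⟨i₀, hne₀⟩ := hne
  -- notation
  set R : Fin n → Set 𝒴 := fun i => Set.range fun ω => Yv ω i with hR
  -- m1 is monotone and nonnegative
  have hmono : ∀ S T : Set 𝒴, S ⊆ T → m1 S ≤ m1 T := by
    intro S T hST
    have := hm1.2.2 S T
    rw [Set.union_eq_self_of_subset_left hST] at this
    exact le_trans (le_max_left _ _) this
  have hnonneg : ∀ S : Set 𝒴, 0 ≤ m1 S := by
    intro S
    rcases S.eq_empty_or_nonempty with h | h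
    · rw [h, hm1.1]
    · exact le_of_lt (hm1.2.1 S h)
  -- Ω is nonempty
  have hΩ : Nonempty Ω := by
    obtain ⟨y, hy, -⟩ := ((hF i₀).2.1 (g₁ i₀) (hg₁ i₀)).2
    obtain ⟨ω, -⟩ := hy
    exact ⟨ω⟩
  -- each R i is nonempty, m1 (R i) > 0
  have hRpos : ∀ i, 0 < m1 (R i) := by
    intro i
    exact hm1.2.1 _ (Set.range_nonempty _)
  -- members of F i are subsets of R i
  have hsub : ∀ i, ∀ S ∈ F i, S ⊆ R i := by
    intro i S hS
    have h := Set.subset_sUnion_of_mem hS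
    rwa [(hF i).1] at h
  -- range Yv = pi of R
  have hRY : Set.range Yv = Set.univ.pi R := by
    apply Set.Subset.antisymm
    · rintro y ⟨ω, rfl⟩ i -
      exact ⟨ω, rfl⟩
    · intro y hy
      have hchoice : ∀ i : Fin n, ∃ ω : Ω, Yv ω i = y i := fun i => hy i (Set.mem_univ i)
      choose ωf hωf using hchoice
      set x : Fin n → 𝒳 := fun i => Xv (ωf i) i with hx
      have hxr : x ∈ Set.range Xv := by
        rw [hX]
        intro i _
        exact ⟨ωf i, rfl⟩
      have hcy : y ∈ condRange Yv Xv x := by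
        rw [hY x hxr]
        intro i _
        exact ⟨ωf i, rfl, hωf i⟩
      obtain ⟨ω, -, hω⟩ := hcy
      exact ⟨ω, hω⟩
  -- the sSup set
  set A : Set ℝ := {r | ∃ i : Fin n, ∃ S ∈ F i,
      r = m1 S / m1 (Set.range fun ω => Yv ω i)} with hA
  have hAbdd : BddAbove A := by
    refine ⟨1, ?_⟩
    rintro r ⟨i, S, hS, rfl⟩
    exact div_le_one_of_le₀ (hmono _ _ (hsub i S hS)) (hnonneg _)
  have hAle : ∀ i, m1 (g₁ i) / m1 (R i) ≤ sSup A := by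
    intro i
    exact le_csSup hAbdd ⟨i, g₁ i, hg₁ i, rfl⟩
  have hSupNonneg : 0 ≤ sSup A :=
    le_trans (div_nonneg (hnonneg _) (hnonneg _)) (hAle i₀)
  -- rewrite numerator and denominator as products
  have hnum : Set.univ.pi g₁ ∩ Set.univ.pi g₂ = Set.univ.pi fun i => g₁ i ∩ g₂ i := by
    ext y
    simp only [Set.mem_inter_iff, Set.mem_pi, Set.mem_univ, forall_true_left]
    exact ⟨fun ⟨h1, h2⟩ i => ⟨h1 i, h2 i⟩, fun h => ⟨fun i => (h i).1, fun i => (h i).2⟩⟩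
  rw [hnum, hRY, hprod, hprod, ← Finset.prod_div_distrib]
  -- pointwise bound
  set f : Fin n → ℝ := fun i => if i = i₀ then δ else sSup A with hf
  have hbound : ∀ i ∈ Finset.univ, m1 (g₁ i ∩ g₂ i) / m1 (R i) ≤ f i := by
    intro i _
    rw [hf]
    by_cases h : i = i₀
    · subst h
      simp only [if_pos rfl]
      rw [div_le_iff₀ (hRpos i)]
      exact (hF i).2.2.1 (g₁ i) (hg₁ i) (g₂ i) (hg₂ i) hne₀
    · simp only [if_neg h]
      refine le_trans ?_ (hAle i)
      exact (div_le_div_iff_of_pos_right (hRpos i)).mpr (hmono _ _ Set.inter_subset_left)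
  refine le_trans (Finset.prod_le_prod (fun i _ => div_nonneg (hnonneg _) (hnonneg _)) hbound) ?_
  rw [← Finset.mul_prod_erase Finset.univ f (Finset.mem_univ i₀)]
  have hfe : ∀ i ∈ Finset.univ.erase i₀, f i = sSup A := by
    intro i hi
    rw [hf]; exact if_neg (Finset.mem_erase.mp hi).1
  rw [Finset.prod_congr rfl hfe, Finset.prod_const, hf]
  simp only [if_pos rfl, if_true]
  rw [Finset.card_erase_of_mem (Finset.mem_univ i₀), Finset.card_univ, Fintype.card_fin]

end NSIT
end
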